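/- Fix N C : ℕ and let A := Fin N × Bool × Fin C with the mutual-exclusion relation MutEx. If S : Finset A admits a consistent schedule for MutEx and S.card = N * C, then for every variable v : Fin N there exists b : Bool such that (v, b, i) ∈ S for every i : Fin C and (v, !b, i) ∉ S for every i : Fin C. -/

import Mathlib

/-- A consistent schedule for a finite set `S` of accepted actions with respect to
the precedence relation `r` is a function `f : α → ℕ` injective on `S` with
`f a < f b` whenever `a ∈ S`, `b ∈ S` and `r a b`. -/
def ConsistentSchedule {α : Type*} (r : α → α → Prop) (S : Finset α) (f : α → ℕ) : Prop :=
  Set.InjOn f ↑S ∧ ∀ a ∈ S, ∀ b ∈ S, r a b → f a < f b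

/-- The mutual-exclusion relation on actions `A := Fin N × Bool × Fin C`:
`(v, false, i)` and `(v, true, j)` are related (in both orders) for all `v`, `i`, `j`,
and no other pairs are related. -/
def MutEx (N C : ℕ) (x y : Fin N × Bool × Fin C) : Prop :=
  x.1 = y.1 ∧ x.2.1 = !y.2.1

/-- `σ(η)`: the set of actions `(v, η v, i)` for `v : Fin N` and `i : Fin C`. -/
def sigmaSet (N C : ℕ) (η : Fin N → Bool) : Finset (Fin N × Bool × Fin C) :=
  Finset.univ.filter fun a => a.2.1 = η a.1

/-!
Since `MutEx` is symmetric, a schedule that is strictly increasing along it cannot accept a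
conflicting pair `(v, b, i)`, `(v, !b, j)`. Hence `a ↦ (a.1, a.2.2)` is injective on `S`, and
`S.card = N * C` makes it onto `Fin N × Fin C`: every `(v, i)` is accepted with some polarity,
and conflict-freeness forces the polarity to depend on `v` only.
-/

theorem ConsistentSchedule.not_rel_of_symm {α : Type*} {r : α → α → Prop} [Std.Symm r]
    {S : Finset α} {f : α → ℕ} (hf : ConsistentSchedule r S f) {a b : α} (ha : a ∈ S)
    (hb : b ∈ S) : ¬ r a b :=
  fun hab => (hf.2 a ha b hb hab).asymm (hf.2 b hb a ha (symm_of r hab))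

instance (N C : ℕ) : Std.Symm (MutEx N C) where
  symm _ _ := fun ⟨hxy, hb⟩ => ⟨hxy.symm, by simp [hb]⟩

namespace ConsistentSchedule

variable {N C : ℕ} {S : Finset (Fin N × Bool × Fin C)} {f : Fin N × Bool × Fin C → ℕ}

theorem mutEx_notMem (hf : ConsistentSchedule (MutEx N C) S f) {v : Fin N} {b : Bool}
    {i : Fin C} (h : (v, b, i) ∈ S) (j : Fin C) : (v, !b, j) ∉ S :=
  fun h' => hf.not_rel_of_symm h h' ⟨rfl, by simp⟩

theorem mutEx_injOn (hf : ConsistentSchedule (MutEx N C) S f) :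
    Set.InjOn (fun a : Fin N × Bool × Fin C => (a.1, a.2.2)) S := by
  rintro ⟨v, b, i⟩ hx ⟨w, c, j⟩ hy hxy
  obtain ⟨rfl, rfl⟩ := Prod.mk.inj hxy
  obtain rfl | rfl := Bool.eq_or_eq_not c b
  · rfl
  · exact absurd hy (hf.mutEx_notMem hx i)

theorem mutEx_exists_mem (hf : ConsistentSchedule (MutEx N C) S f) (hcard : S.card = N * C)
    (v : Fin N) (i : Fin C) : ∃ b, (v, b, i) ∈ S := by
  have hsurj : Set.SurjOn (fun a : Fin N × Bool × Fin C => (a.1, a.2.2)) S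
      (Finset.univ : Finset (Fin N × Fin C)) :=
    Finset.surjOn_of_injOn_of_card_le _ (fun _ _ => Finset.mem_univ _) hf.mutEx_injOn
      (by simp [hcard])
  obtain ⟨⟨w, b, j⟩, hmem, hwj⟩ := hsurj (Finset.mem_univ (v, i))
  obtain ⟨rfl, rfl⟩ := Prod.mk.inj hwj
  exact ⟨b, hmem⟩

theorem mutEx_mem_of_mem (hf : ConsistentSchedule (MutEx N C) S f) (hcard : S.card = N * C)
    {v : Fin N} {b : Bool} {i₀ : Fin C} (h : (v, b, i₀) ∈ S) (i : Fin C) : (v, b, i) ∈ S := by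
  obtain ⟨c, hc⟩ := hf.mutEx_exists_mem hcard v i
  obtain rfl | rfl := Bool.eq_or_eq_not c b
  · exact hc
  · exact absurd hc (hf.mutEx_notMem h i)

end ConsistentSchedule

/-- If `S` admits a consistent schedule for `MutEx` and `S.card = N * C`, then for
every variable `v` there is a boolean `b` such that `(v, b, i) ∈ S` for all `i` and
`(v, !b, i) ∉ S` for all `i`. -/
theorem mutEx_schedule_determines_valuation (N C : ℕ) (S : Finset (Fin N × Bool × Fin C))
    (h : ∃ f : Fin N × Bool × Fin C → ℕ, ConsistentSchedule (MutEx N C) S f)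
    (hcard : S.card = N * C) :
    ∀ v : Fin N, ∃ b : Bool,
      (∀ i : Fin C, (v, b, i) ∈ S) ∧ (∀ i : Fin C, (v, !b, i) ∉ S) := by
  intro v
  obtain ⟨f, hf⟩ := h
  rcases isEmpty_or_nonempty (Fin C) with hC | ⟨⟨i₀⟩⟩
  · exact ⟨true, isEmptyElim, isEmptyElim⟩
  · obtain ⟨b, hb⟩ := hf.mutEx_exists_mem hcard v i₀
    exact ⟨b, hf.mutEx_mem_of_mem hcard hb, hf.mutEx_notMem hb⟩
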